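/- Assume in addition σ² ≠ 2D. Then for every α ∈ [σ², r₂²) there exists a unique β ∈ (r₁², |σ² − 2D|) such that h(β) = h(α), and this β moreover satisfies α + β ≤ 2σ². -/
import Mathlib


noncomputable section

/-- `h(z) = (z + σ² - 2D)²/(4 z (σ² - D))`. -/
def hFn (σ2 D z : ℝ) : ℝ := (z + σ2 - 2 * D) ^ 2 / (4 * z * (σ2 - D))

set_option maxHeartbeats 1000000 in
/-- **Lemma 6 of the paper.** Assume `0 < D < σ²` and `σ² ≠ 2D`. For every
`α ∈ [σ², r₂²)` there exists a unique `β ∈ (r₁², |σ² - 2D|)` with `h(β) = h(α)`, and this `β`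
satisfies `α + β ≤ 2σ²` (here `r₁ = √(σ²-D) - √D` and `r₂ = √(σ²-D) + √D`). -/
theorem hFn_matching_beta (σ2 D : ℝ) (hD : 0 < D) (hDσ : D < σ2) (hne : σ2 ≠ 2 * D)
    (α : ℝ) (hα : α ∈ Set.Ico σ2 ((Real.sqrt (σ2 - D) + Real.sqrt D) ^ 2)) :
    (∃! β : ℝ, β ∈ Set.Ioo ((Real.sqrt (σ2 - D) - Real.sqrt D) ^ 2) |σ2 - 2 * D| ∧
        hFn σ2 D β = hFn σ2 D α) ∧
    (∀ β : ℝ, β ∈ Set.Ioo ((Real.sqrt (σ2 - D) - Real.sqrt D) ^ 2) |σ2 - 2 * D| →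
        hFn σ2 D β = hFn σ2 D α → α + β ≤ 2 * σ2) := by
  obtain ⟨hα1, hα2⟩ := hα
  have hs : 0 < σ2 - D := by linarith
  have hσ : 0 < σ2 := by linarith
  have hαpos : 0 < α := lt_of_lt_of_le hσ hα1
  have hcne : σ2 - 2 * D ≠ 0 := sub_ne_zero.mpr hne
  have hc2pos : 0 < (σ2 - 2 * D) ^ 2 :=
    lt_of_le_of_ne (sq_nonneg _) (Ne.symm (pow_ne_zero 2 hcne))
  have hcabs : |σ2 - 2 * D| < σ2 := abs_lt.mpr ⟨by linarith, by linarith⟩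
  have hcabs_pos : 0 < |σ2 - 2 * D| := abs_pos.mpr hcne
  have hsq_abs : |σ2 - 2 * D| ^ 2 = (σ2 - 2 * D) ^ 2 := sq_abs _
  have h1 := Real.sq_sqrt hs.le
  have h2 := Real.sq_sqrt hD.le
  have hss := Real.sqrt_nonneg (σ2 - D)
  have hsd := Real.sqrt_nonneg D
  have hr1ne : Real.sqrt (σ2 - D) - Real.sqrt D ≠ 0 := by
    intro h
    have h3 : Real.sqrt (σ2 - D) = Real.sqrt D := by linarith
    rw [h3] at h1
    apply hne
    linarith [h1, h2]
  have hr1pos : 0 < (Real.sqrt (σ2 - D) - Real.sqrt D) ^ 2 :=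
    lt_of_le_of_ne (sq_nonneg _) (Ne.symm (pow_ne_zero 2 hr1ne))
  have hr12 : (Real.sqrt (σ2 - D) - Real.sqrt D) ^ 2 * (Real.sqrt (σ2 - D) + Real.sqrt D) ^ 2
      = (σ2 - 2 * D) ^ 2 := by
    rw [← mul_pow]
    have h4 : (Real.sqrt (σ2 - D) - Real.sqrt D) * (Real.sqrt (σ2 - D) + Real.sqrt D)
        = σ2 - 2 * D := by linear_combination h1 - h2
    rw [h4]
  have key : ∀ β : ℝ, 0 < β →
      (hFn σ2 D β = hFn σ2 D α ↔ (β - α) * (β * α - (σ2 - 2 * D) ^ 2) = 0) := by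
    intro β hβ
    unfold hFn
    rw [div_eq_div_iff (mul_ne_zero (mul_ne_zero (by norm_num) hβ.ne') hs.ne')
      (mul_ne_zero (mul_ne_zero (by norm_num) hαpos.ne') hs.ne')]
    constructor
    · intro h
      have h4 : (β - α) * (β * α - (σ2 - 2 * D) ^ 2) * (4 * (σ2 - D)) = 0 := by
        linear_combination h
      rcases mul_eq_zero.1 h4 with h' | h'
      · exact h'
      · exact absurd h' (ne_of_gt (by linarith))
    · intro h
      linear_combination (4 * (σ2 - D)) * h
  set β₀ : ℝ := (σ2 - 2 * D) ^ 2 / α with hβ₀def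
  have hβ₀pos : 0 < β₀ := div_pos hc2pos hαpos
  have hβ₀α : β₀ * α = (σ2 - 2 * D) ^ 2 := div_mul_cancel₀ _ hαpos.ne'
  have hβ₀mem : β₀ ∈ Set.Ioo ((Real.sqrt (σ2 - D) - Real.sqrt D) ^ 2) |σ2 - 2 * D| := by
    constructor
    · rw [hβ₀def, lt_div_iff₀ hαpos]
      nlinarith [hr12, hα2, hr1pos]
    · rw [hβ₀def, div_lt_iff₀ hαpos]
      nlinarith [hcabs_pos, hsq_abs, hα1, hcabs]
  have hβ₀eq : hFn σ2 D β₀ = hFn σ2 D α := by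
    rw [key β₀ hβ₀pos, hβ₀α]
    ring
  have huniq : ∀ β : ℝ,
      β ∈ Set.Ioo ((Real.sqrt (σ2 - D) - Real.sqrt D) ^ 2) |σ2 - 2 * D| →
      hFn σ2 D β = hFn σ2 D α → β = β₀ := by
    intro β hβmem hβeq
    have hβpos : 0 < β := lt_trans hr1pos hβmem.1
    have h5 := (key β hβpos).mp hβeq
    rcases mul_eq_zero.1 h5 with h' | h'
    · exfalso
      have hβα : β = α := by linarith
      have hβlt : β < σ2 := lt_trans hβmem.2 hcabs
      linarith
    · rw [hβ₀def, eq_div_iff hαpos.ne']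
      linarith
  have hineq : α + β₀ ≤ 2 * σ2 := by
    have ht : (Real.sqrt (σ2 - D) * Real.sqrt D) ^ 2 = (σ2 - D) * D := by
      rw [mul_pow, h1, h2]
    have hexp : α < σ2 + 2 * (Real.sqrt (σ2 - D) * Real.sqrt D) := by
      nlinarith [hα2, h1, h2]
    have hquad : α ^ 2 + (σ2 - 2 * D) ^ 2 ≤ 2 * σ2 * α := by
      nlinarith [hexp, hα1, ht, mul_nonneg hss hsd, sq_nonneg (α - σ2),
        mul_nonneg (mul_nonneg hss hsd) (sub_nonneg.2 hα1)]
    have hdle : (σ2 - 2 * D) ^ 2 / α ≤ 2 * σ2 - α := by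
      rw [div_le_iff₀ hαpos]
      nlinarith [hquad]
    rw [hβ₀def]
    linarith
  refine ⟨⟨β₀, ⟨hβ₀mem, hβ₀eq⟩, fun β hβ => huniq β hβ.1 hβ.2⟩, fun β hβmem hβeq => ?_⟩
  rw [huniq β hβmem hβeq]
  exact hineq
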